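/- The space 𝓑̂ of barcodes modulo overall shift, equipped with the distance induced by the bottleneck distance, is a complete metric space: every Cauchy sequence in 𝓑̂ converges. -/

import Mathlib

/-!
Pass to a subsequence `v` with `δ̂(v k, v (k+1)) < 2⁻ᵏ`, realise these distances by matchings and
absorb the shifts, obtaining barcodes `W k` with `2⁻ᵏ`-matchings `W k → W (k+1)`. Following a bar
through these matchings, its end points move by at most `2⁻ᵏ` at stage `k`, so they converge. The
limit barcode has one bar for each maximal thread of matched bars that is never deleted and whose
limit is non-degenerate. A thread that dies, degenerates, or starts after stage `k` consists of
bars of length `O(2⁻ᵏ)`, which yields a `3·2⁻ᵏ`-matching from `W k` to the limit (and, through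
it, the finiteness of long limit bars); the triangle inequality for `δ̂` then gives convergence of
the whole sequence.
-/

open scoped ENNReal

/-- A bar `(a, b]`, where the second component `⊤ : EReal` encodes a
semi-infinite bar `(a, +∞)`. -/
abbrev Bar := ℝ × EReal

namespace Bar

/-- A bar is valid when it describes a non-empty interval. -/
def IsValid (I : Bar) : Prop := (I.1 : EReal) < I.2

/-- The length of a bar. -/
noncomputable def length (I : Bar) : EReal := I.2 - (I.1 : EReal)

/-- The interval `(a, b]` (or `(a, +∞)`) underlying a bar, as a subset of `ℝ`. -/
def toSet (I : Bar) : Set ℝ := {x | I.1 < x ∧ (x : EReal) ≤ I.2}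

/-- The `δ`-thickening `I^{-δ}` of a bar: `(a, b]` becomes `(a - δ, b + δ]`
and `(a, +∞)` becomes `(a - δ, +∞)`. -/
noncomputable def thicken (δ : ℝ) (I : Bar) : Bar := (I.1 - δ, I.2 + (δ : EReal))

/-- The shift of a bar by `c ∈ ℝ`. -/
noncomputable def shift (c : ℝ) (I : Bar) : Bar := (I.1 + c, I.2 + (c : EReal))

/-- A bar is semi-infinite when its right end point is `+∞`. -/
def IsInfinite (I : Bar) : Prop := I.2 = ⊤

lemma length_shift (c : ℝ) (I : Bar) : (I.shift c).length = I.length := by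
  obtain ⟨a, b⟩ := I
  induction b using EReal.rec with
  | bot => simp [shift, length]
  | top => show (⊤ : EReal) - ((a + c : ℝ) : EReal) = ⊤ - (a : EReal); rw [EReal.top_sub_coe, EReal.top_sub_coe]
  | coe b =>
      show ((b : EReal) + (c : EReal)) - ((a + c : ℝ) : EReal) = (b : EReal) - (a : EReal)
      norm_cast
      ring

lemma IsValid.shift {I : Bar} (h : I.IsValid) (c : ℝ) : (I.shift c).IsValid := by
  obtain ⟨a, b⟩ := I
  show ((a + c : ℝ) : EReal) < b + (c : EReal)
  push_cast
  exact EReal.add_lt_add_right_coe h c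

end Bar

/-- A barcode: a multiset of valid bars (encoded by an indexed family), such
that for every `ε > 0` only finitely many bars have length at least `ε`. -/
structure Barcode where
  ι : Type
  bar : ι → Bar
  valid : ∀ i, (bar i).IsValid
  finLong : ∀ ε : ℝ, 0 < ε → {i | (ε : EReal) ≤ (bar i).length}.Finite

namespace Barcode

/-- Equality of barcodes as multisets of bars: there is a bijection between the
index sets commuting with the bars. -/
def Equiv (B B' : Barcode) : Prop :=
  ∃ e : B.ι ≃ B'.ι, ∀ i, B'.bar (e i) = B.bar i

/-- A `δ`-matching between two barcodes: one deletes, in both barcodes, some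
bars of length at most `2δ`, and finds a bijection `φ` between the remaining
bars such that `φ(I) = J` implies `I ⊆ J^{-δ}` and `J ⊆ I^{-δ}`. -/
structure Matching (δ : ℝ) (B B' : Barcode) where
  del : Set B.ι
  del' : Set B'.ι
  del_short : ∀ i ∈ del, (B.bar i).length ≤ ((2 * δ : ℝ) : EReal)
  del'_short : ∀ j ∈ del', (B'.bar j).length ≤ ((2 * δ : ℝ) : EReal)
  φ : ↥(delᶜ) ≃ ↥(del'ᶜ)
  subset : ∀ i : ↥(delᶜ), (B.bar i).toSet ⊆ (Bar.thicken δ (B'.bar (φ i))).toSet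
  subset' : ∀ i : ↥(delᶜ), (B'.bar (φ i)).toSet ⊆ (Bar.thicken δ (B.bar i)).toSet

/-- The bottleneck distance between two barcodes (`⊤` if no matching exists). -/
noncomputable def dBottle (B B' : Barcode) : ℝ≥0∞ :=
  sInf (ENNReal.ofReal '' {δ : ℝ | 0 ≤ δ ∧ Nonempty (Matching δ B B')})

/-- The shift of a barcode by `c ∈ ℝ`, denoted `B[c]`. -/
noncomputable def shift (c : ℝ) (B : Barcode) : Barcode where
  ι := B.ι
  bar i := (B.bar i).shift c
  valid i := (B.valid i).shift c
  finLong ε hε := by simpa [Bar.length_shift] using B.finLong ε hε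

/-- `σ^∞(B)`: the number of semi-infinite bars of `B`. -/
noncomputable def sigmaInf (B : Barcode) : ℕ :=
  Nat.card {i : B.ι // (B.bar i).IsInfinite}

/-- The quotient pseudo-distance on the space `𝓑̂` of barcodes modulo overall
shift: `δ([B], [B']) = inf_c d_bottle(B, B'[c])`. -/
noncomputable def dHat (B B' : Barcode) : ℝ≥0∞ :=
  ⨅ c : ℝ, dBottle B (B'.shift c)

end Barcode

open Filter Topology

lemma EReal.le_add_coe_and_le_add_coe_iff {a b : EReal} (ha : a ≠ ⊥) (hb : b ≠ ⊥) {δ : ℝ}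
    (hδ : 0 ≤ δ) :
    (a ≤ b + δ ∧ b ≤ a + δ) ↔ ((a = ⊤ ↔ b = ⊤) ∧ |a.toReal - b.toReal| ≤ δ) := by
  induction a using EReal.rec with
  | bot => exact absurd rfl ha
  | top =>
    induction b using EReal.rec with
    | bot => exact absurd rfl hb
    | top => simp [hδ]
    | coe y => simp [← EReal.coe_add]
  | coe x =>
    induction b using EReal.rec with
    | bot => exact absurd rfl hb
    | top => simp [← EReal.coe_add]
    | coe y =>
      simp only [← EReal.coe_add, EReal.coe_le_coe_iff, EReal.toReal_coe, EReal.coe_ne_top,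
        abs_sub_le_iff, true_and]
      constructor <;> rintro ⟨h₁, h₂⟩ <;> constructor <;> linarith

namespace Bar

/-- The end point `+∞` is sent to `0`. -/
noncomputable def ends (I : Bar) : ℝ × ℝ := (I.1, I.2.toReal)

/-- End point form of the matching condition `I ⊆ J^{-δ}`, `J ⊆ I^{-δ}`, see `close_iff_subset`. -/
def Close (δ : ℝ) (I J : Bar) : Prop := (I.IsInfinite ↔ J.IsInfinite) ∧ dist I.ends J.ends ≤ δ

variable {δ δ' : ℝ} {I J K : Bar}

lemma IsValid.snd_ne_bot (hI : I.IsValid) : I.2 ≠ ⊥ := ne_bot_of_gt hI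

lemma Close.symm (h : I.Close δ J) : J.Close δ I := ⟨h.1.symm, dist_comm I.ends J.ends ▸ h.2⟩

lemma Close.trans (h : I.Close δ J) (h' : J.Close δ' K) : I.Close (δ + δ') K :=
  ⟨h.1.trans h'.1, (dist_triangle _ _ _).trans (add_le_add h.2 h'.2)⟩

lemma Close.mono (h : I.Close δ J) (hδ : δ ≤ δ') : I.Close δ' J := ⟨h.1, h.2.trans hδ⟩

lemma close_refl (hδ : 0 ≤ δ) (I : Bar) : I.Close δ I := ⟨Iff.rfl, by simpa using hδ⟩

lemma Close.nonneg (h : I.Close δ J) : 0 ≤ δ := dist_nonneg.trans h.2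

lemma close_iff_endpoints (hI : I.2 ≠ ⊥) (hJ : J.2 ≠ ⊥) :
    I.Close δ J ↔ |I.1 - J.1| ≤ δ ∧ I.2 ≤ J.2 + δ ∧ J.2 ≤ I.2 + δ := by
  constructor
  · intro h
    have hδ := h.nonneg
    rw [Close, Prod.dist_eq, max_le_iff] at h
    refine ⟨?_, (EReal.le_add_coe_and_le_add_coe_iff hI hJ hδ).2 ⟨h.1, ?_⟩⟩
    · simpa [ends, Real.dist_eq] using h.2.1
    · simpa [ends, Real.dist_eq] using h.2.2
  · rintro ⟨h₁, h₂⟩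
    obtain ⟨hinf, h₂⟩ :=
      (EReal.le_add_coe_and_le_add_coe_iff hI hJ ((abs_nonneg _).trans h₁)).1 h₂
    exact ⟨hinf, by simpa [Prod.dist_eq, ends, Real.dist_eq, h₁] using h₂⟩

lemma toSet_subset_thicken_iff (hI : I.IsValid) :
    I.toSet ⊆ (J.thicken δ).toSet ↔ J.1 - δ ≤ I.1 ∧ I.2 ≤ J.2 + δ := by
  refine ⟨fun h => ⟨?_, ?_⟩, fun h x hx => ⟨h.1.trans_lt hx.1, hx.2.trans h.2⟩⟩
  · refine le_of_forall_gt_imp_ge_of_dense fun y hy => ?_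
    obtain ⟨x, hx, hxy⟩ := EReal.lt_iff_exists_real_btwn.1 (lt_min (EReal.coe_lt_coe_iff.2 hy) hI)
    have hxI : x ∈ I.toSet := ⟨EReal.coe_lt_coe_iff.1 hx, (hxy.trans_le (min_le_right _ _)).le⟩
    exact (h hxI).1.le.trans (EReal.coe_le_coe_iff.1 (hxy.le.trans (min_le_left _ _)))
  · refine le_of_forall_lt_imp_le_of_dense fun y hy => ?_
    obtain ⟨x, hx, hxb⟩ := EReal.lt_iff_exists_real_btwn.1 (max_lt hy hI)
    have hxI : x ∈ I.toSet := ⟨EReal.coe_lt_coe_iff.1 ((le_max_right _ _).trans_lt hx), hxb.le⟩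
    exact ((le_max_left _ _).trans hx.le).trans (h hxI).2

lemma close_iff_subset (hI : I.IsValid) (hJ : J.IsValid) :
    I.Close δ J ↔ I.toSet ⊆ (J.thicken δ).toSet ∧ J.toSet ⊆ (I.thicken δ).toSet := by
  rw [close_iff_endpoints hI.snd_ne_bot hJ.snd_ne_bot, toSet_subset_thicken_iff hI,
    toSet_subset_thicken_iff hJ, abs_sub_le_iff]
  constructor
  · rintro ⟨⟨h₁, h₂⟩, h₃, h₄⟩
    exact ⟨⟨by linarith, h₃⟩, by linarith, h₄⟩
  · rintro ⟨⟨h₁, h₃⟩, h₂, h₄⟩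
    exact ⟨⟨by linarith, by linarith⟩, h₃, h₄⟩

lemma Close.shift (h : I.Close δ J) (hI : I.2 ≠ ⊥) (hJ : J.2 ≠ ⊥) (c : ℝ) :
    (I.shift c).Close δ (J.shift c) := by
  have hc : ∀ {x : EReal}, x ≠ ⊥ → x + c ≠ ⊥ := by
    intro x hx
    induction x using EReal.rec <;> simp_all
  rw [close_iff_endpoints hI hJ] at h
  rw [close_iff_endpoints (hc hI) (hc hJ)]
  simp only [Bar.shift, add_sub_add_right_eq_sub]
  have key : ∀ {x y : EReal}, x ≤ y + δ → x + c ≤ y + c + δ := fun hxy =>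
    calc _ ≤ _ + (c : EReal) := by gcongr
      _ = _ := add_right_comm _ _ _
  exact ⟨h.1, key h.2.1, key h.2.2⟩

lemma Close.length_le (h : I.Close δ J) (hI : I.2 ≠ ⊥) (hJ : J.2 ≠ ⊥) :
    I.length ≤ J.length + (2 * δ : ℝ) := by
  rw [close_iff_endpoints hI hJ, abs_sub_le_iff] at h
  obtain ⟨⟨-, h₁⟩, h₂, -⟩ := h
  obtain ⟨a, b⟩ := I
  obtain ⟨a', b'⟩ := J
  simp only [length] at *
  induction b' using EReal.rec with
  | bot => exact absurd rfl hJ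
  | top => rw [EReal.top_sub_coe, EReal.top_add_coe]; exact le_top
  | coe y =>
    induction b using EReal.rec with
    | bot => exact absurd rfl hI
    | top => exact absurd h₂ (by simp [← EReal.coe_add])
    | coe x =>
      simp only [← EReal.coe_add, ← EReal.coe_sub, EReal.coe_le_coe_iff] at h₂ ⊢
      linarith

end Bar

namespace Barcode

variable {δ δ' : ℝ} {B B' B'' : Barcode}

namespace Matching

lemma close (M : Matching δ B B') (i : ↥M.delᶜ) : (B.bar i).Close δ (B'.bar (M.φ i)) :=
  (Bar.close_iff_subset (B.valid _) (B'.valid _)).2 ⟨M.subset i, M.subset' i⟩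

def ofClose (del : Set B.ι) (del' : Set B'.ι)
    (del_short : ∀ i ∈ del, (B.bar i).length ≤ ((2 * δ : ℝ) : EReal))
    (del'_short : ∀ j ∈ del', (B'.bar j).length ≤ ((2 * δ : ℝ) : EReal))
    (φ : ↥delᶜ ≃ ↥del'ᶜ) (close : ∀ i : ↥delᶜ, (B.bar i).Close δ (B'.bar (φ i))) :
    Matching δ B B' where
  del := del
  del' := del'
  del_short := del_short
  del'_short := del'_short
  φ := φ
  subset i := ((Bar.close_iff_subset (B.valid _) (B'.valid _)).1 (close i)).1
  subset' i := ((Bar.close_iff_subset (B.valid _) (B'.valid _)).1 (close i)).2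

def symm (M : Matching δ B B') : Matching δ B' B :=
  ofClose M.del' M.del M.del'_short M.del_short M.φ.symm fun j => by
    simpa using (M.close (M.φ.symm j)).symm

def mono (M : Matching δ B B') (h : δ ≤ δ') : Matching δ' B B' :=
  have h2 : ((2 * δ : ℝ) : EReal) ≤ ((2 * δ' : ℝ) : EReal) := by exact_mod_cast by linarith
  ofClose M.del M.del' (fun i hi => (M.del_short i hi).trans h2)
    (fun j hj => (M.del'_short j hj).trans h2) M.φ fun i => (M.close i).mono h

noncomputable def shift (M : Matching δ B B') (c : ℝ) : Matching δ (B.shift c) (B'.shift c) :=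
  ofClose M.del M.del'
    (fun i hi => (Bar.length_shift c _).trans_le (M.del_short i hi))
    (fun j hj => (Bar.length_shift c _).trans_le (M.del'_short j hj)) M.φ
    fun i => (M.close i).shift (B.valid _).snd_ne_bot (B'.valid _).snd_ne_bot c

/-- The indices of `B` that are deleted by `M` or sent into `t`. -/
def pullDel (M : Matching δ B B') (t : Set B'.ι) : Set B.ι :=
  {i | ∃ h : i ∈ M.delᶜ, (M.φ ⟨i, h⟩ : B'.ι) ∉ t}ᶜ

def pullEquiv (M : Matching δ B B') (t : Set B'.ι) :
    ↥(M.pullDel t)ᶜ ≃ {j : B'.ι // j ∈ M.del'ᶜ ∧ j ∉ t} :=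
  (Equiv.subtypeEquivRight fun _ => not_not).trans <|
    (Equiv.subtypeSubtypeEquivSubtypeExists _ (fun x => (M.φ x : B'.ι) ∉ t)).symm.trans <|
    (M.φ.subtypeEquiv fun _ => Iff.rfl).trans <|
    Equiv.subtypeSubtypeEquivSubtypeInter (· ∈ M.del'ᶜ) (· ∉ t)

lemma close_pullEquiv (M : Matching δ B B') (t : Set B'.ι) (i : ↥(M.pullDel t)ᶜ) :
    (B.bar i).Close δ (B'.bar (M.pullEquiv t i)) :=
  M.close ⟨i, (not_not.1 i.2).1⟩

lemma pullDel_short (M : Matching δ B B') {t : Set B'.ι}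
    (ht : ∀ j ∈ t, (B'.bar j).length ≤ ((2 * δ' : ℝ) : EReal)) (hδ' : 0 ≤ δ') :
    ∀ i ∈ M.pullDel t, (B.bar i).length ≤ ((2 * (δ + δ') : ℝ) : EReal) := by
  intro i hi
  by_cases hdel : i ∈ M.del
  · exact (M.del_short i hdel).trans (by exact_mod_cast by linarith)
  · have hφ : (M.φ ⟨i, hdel⟩ : B'.ι) ∈ t := by_contra fun h => hi ⟨hdel, h⟩
    calc (B.bar i).length ≤ (B'.bar (M.φ ⟨i, hdel⟩)).length + ((2 * δ : ℝ) : EReal) :=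
          (M.close ⟨i, hdel⟩).length_le (B.valid _).snd_ne_bot (B'.valid _).snd_ne_bot
      _ ≤ ((2 * δ' : ℝ) : EReal) + ((2 * δ : ℝ) : EReal) := by gcongr; exact ht _ hφ
      _ = ((2 * (δ + δ') : ℝ) : EReal) := by norm_cast; ring

def comp (M : Matching δ B B') (M' : Matching δ' B' B'') (hδ : 0 ≤ δ) (hδ' : 0 ≤ δ') :
    Matching (δ + δ') B B'' :=
  ofClose (M.pullDel M'.del) (M'.symm.pullDel M.del') (M.pullDel_short M'.del_short hδ')
    (by simpa only [add_comm δ] using M'.symm.pullDel_short M.del'_short hδ)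
    ((M.pullEquiv M'.del).trans <|
      (Equiv.subtypeEquivRight fun _ => and_comm).trans (M'.symm.pullEquiv M.del').symm)
    fun i => by
      have h := (M'.symm.close_pullEquiv M.del' ((M'.symm.pullEquiv M.del').symm
        ((Equiv.subtypeEquivRight fun _ => and_comm) (M.pullEquiv M'.del i)))).symm
      rw [Equiv.apply_symm_apply] at h
      exact (M.close_pullEquiv _ i).trans h

end Matching

lemma Equiv.refl (B : Barcode) : B.Equiv B := ⟨_root_.Equiv.refl _, fun _ => rfl⟩

lemma Equiv.symm (h : B.Equiv B') : B'.Equiv B := by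
  obtain ⟨e, he⟩ := h
  exact ⟨e.symm, fun j => by rw [← he (e.symm j), e.apply_symm_apply]⟩

lemma Equiv.trans (h : B.Equiv B') (h' : B'.Equiv B'') : B.Equiv B'' := by
  obtain ⟨e, he⟩ := h
  obtain ⟨e', he'⟩ := h'
  exact ⟨e.trans e', fun i => (he' _).trans (he i)⟩

lemma shift_shift_equiv (B : Barcode) {a b c : ℝ} (h : a + b = c) :
    ((B.shift a).shift b).Equiv (B.shift c) :=
  ⟨.refl _, fun i => show (B.bar i).shift c = ((B.bar i).shift a).shift b by
    simp only [Bar.shift, ← h, EReal.coe_add, add_assoc]⟩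

lemma shift_zero_equiv (B : Barcode) : (B.shift 0).Equiv B :=
  ⟨.refl _, fun i => show B.bar i = (B.bar i).shift 0 by simp [Bar.shift]⟩

lemma Equiv.nonempty_matching (h : B.Equiv B') : Nonempty (Matching 0 B B') := by
  obtain ⟨e, he⟩ := h
  refine ⟨.ofClose ∅ ∅ (by simp) (by simp) (e.subtypeEquiv (by simp)) fun i => ?_⟩
  simpa [he] using Bar.close_refl le_rfl _

lemma nonempty_matching_of_equiv {B₁ B₂ B₁' B₂' : Barcode} (M : Matching δ B₁ B₂)
    (h₁ : B₁.Equiv B₁') (h₂ : B₂.Equiv B₂') (hδ : 0 ≤ δ) : Nonempty (Matching δ B₁' B₂') := by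
  obtain ⟨M₁⟩ := h₁.symm.nonempty_matching
  obtain ⟨M₂⟩ := h₂.nonempty_matching
  exact ⟨((M₁.comp M le_rfl hδ).comp M₂ (by linarith) le_rfl).mono (by linarith)⟩

lemma dHat_eq_iInf (B B' : Barcode) : dHat B B' =
    ⨅ (p : ℝ × ℝ) (_ : 0 ≤ p.2 ∧ Nonempty (Matching p.2 B (B'.shift p.1))), ENNReal.ofReal p.2 := by
  simp only [dHat, dBottle, sInf_image, iInf_prod, Set.mem_ofPred_eq]

lemma dHat_le_of_matching {c : ℝ} (M : Matching δ B (B'.shift c)) (hδ : 0 ≤ δ) :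
    dHat B B' ≤ ENNReal.ofReal δ := by
  rw [dHat_eq_iInf]
  exact iInf₂_le (c, δ) ⟨hδ, ⟨M⟩⟩

lemma exists_matching_of_dHat_lt {ε : ℝ} (h : dHat B B' < ENNReal.ofReal ε) :
    ∃ c δ, 0 ≤ δ ∧ δ < ε ∧ Nonempty (Matching δ B (B'.shift c)) := by
  rw [dHat_eq_iInf] at h
  obtain ⟨⟨c, δ⟩, h⟩ := iInf_lt_iff.1 h
  obtain ⟨⟨hδ, hM⟩, h⟩ := iInf_lt_iff.1 h
  exact ⟨c, δ, hδ, (ENNReal.ofReal_lt_ofReal_iff_of_nonneg hδ).1 h, hM⟩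

lemma dHat_le_of_matching_shift {a : ℝ} (M : Matching δ (B.shift a) B') (hδ : 0 ≤ δ) :
    dHat B B' ≤ ENNReal.ofReal δ := by
  obtain ⟨M'⟩ := nonempty_matching_of_equiv (M.shift (-a))
    ((B.shift_shift_equiv (add_neg_cancel a)).trans B.shift_zero_equiv)
    (.refl _) hδ
  exact dHat_le_of_matching M' hδ

theorem dHat_triangle (B₁ B₂ B₃ : Barcode) : dHat B₁ B₃ ≤ dHat B₁ B₂ + dHat B₂ B₃ := by
  rw [dHat_eq_iInf B₁ B₂, dHat_eq_iInf B₂ B₃]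
  refine ENNReal.le_iInf₂_add_iInf₂ fun ⟨c, δ⟩ ⟨hδ, ⟨M⟩⟩ ⟨c', δ'⟩ ⟨hδ', ⟨M'⟩⟩ => ?_
  obtain ⟨M''⟩ := nonempty_matching_of_equiv (M'.shift c) (.refl _)
    (B₃.shift_shift_equiv rfl) hδ'
  rw [← ENNReal.ofReal_add hδ hδ']
  exact dHat_le_of_matching (M.comp M'' hδ hδ') (add_nonneg hδ hδ')

lemma finite_setOf_le_length_of_close {ι : Type} {bar : ι → Bar} (hbar : ∀ j, (bar j).2 ≠ ⊥)
    {B : Barcode} {δ ε : ℝ} (hε : 2 * δ < ε) {del : Set B.ι} {del' : Set ι}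
    (hdel' : ∀ j ∈ del', (bar j).length ≤ ((2 * δ : ℝ) : EReal)) (φ : ↥delᶜ ≃ ↥del'ᶜ)
    (hφ : ∀ i : ↥delᶜ, (B.bar i).Close δ (bar (φ i))) :
    {j | (ε : EReal) ≤ (bar j).length}.Finite := by
  have hB : (Subtype.val ⁻¹' {i : B.ι | ((ε - 2 * δ : ℝ) : EReal) ≤ (B.bar i).length} :
      Set ↥delᶜ).Finite :=
    (B.finLong _ (by linarith)).preimage Subtype.val_injective.injOn
  refine (hB.image fun i => (φ i : ι)).subset fun j hj => ?_
  have hj' : j ∈ del'ᶜ := fun hdel =>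
    (EReal.coe_lt_coe_iff.2 hε).not_ge (hj.trans (hdel' j hdel))
  refine ⟨φ.symm ⟨j, hj'⟩, ?_, by simp⟩
  have hclose := (hφ (φ.symm ⟨j, hj'⟩)).symm
  rw [φ.apply_symm_apply] at hclose
  rw [Set.mem_preimage, Set.mem_ofPred_eq, EReal.coe_sub]
  exact EReal.sub_le_of_le_add (hj.trans (hclose.length_le (hbar j) (B.valid _).snd_ne_bot))

structure MatchingChain where
  barcode : ℕ → Barcode
  matching : ∀ k, Matching ((1 / 2 : ℝ) ^ k) (barcode k) (barcode (k + 1))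

namespace MatchingChain

section Flow

variable (C : MatchingChain)

abbrev Pt : Type := Σ k, (C.barcode k).ι

def bar (p : C.Pt) : Bar := (C.barcode p.1).bar p.2

open Classical in
noncomputable def step (p : C.Pt) : Option C.Pt :=
  if h : p.2 ∈ (C.matching p.1).del then none
  else some ⟨p.1 + 1, (C.matching p.1).φ ⟨p.2, h⟩⟩

noncomputable def flow : ℕ → C.Pt → Option C.Pt
  | 0, p => some p
  | n + 1, p => (flow n p).bind C.step

def IsBorn (p : C.Pt) : Prop := ∀ q, C.step q ≠ some p

def Survives (p : C.Pt) : Prop := ∀ n, (C.flow n p).isSome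

variable {C} {p p' q : C.Pt} {m n : ℕ}

lemma bar_isValid (p : C.Pt) : (C.bar p).IsValid := (C.barcode p.1).valid p.2

lemma exists_of_step_eq_some (h : C.step p = some q) :
    ∃ hp : p.2 ∉ (C.matching p.1).del, q = ⟨p.1 + 1, (C.matching p.1).φ ⟨p.2, hp⟩⟩ := by
  unfold step at h
  split_ifs at h with hp
  exact ⟨hp, (Option.some_injective _ h).symm⟩

lemma fst_of_step_eq_some (h : C.step p = some q) : q.1 = p.1 + 1 := by
  obtain ⟨_, rfl⟩ := exists_of_step_eq_some h
  rfl

lemma close_of_step_eq_some (h : C.step p = some q) :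
    (C.bar p).Close ((1 / 2) ^ p.1) (C.bar q) := by
  obtain ⟨hp, rfl⟩ := exists_of_step_eq_some h
  exact (C.matching p.1).close ⟨p.2, hp⟩

lemma eq_of_step_eq_some (h : C.step p = some q) (h' : C.step p' = some q) : p = p' := by
  obtain ⟨k, i⟩ := p
  obtain ⟨k', i'⟩ := p'
  obtain ⟨hi, rfl⟩ := exists_of_step_eq_some h
  obtain ⟨hi', hq⟩ := exists_of_step_eq_some h'
  obtain ⟨hk, hφ⟩ := Sigma.mk.inj_iff.1 hq
  obtain rfl : k = k' := Nat.succ_injective hk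
  have := (C.matching k).φ.injective (Subtype.ext (eq_of_heq hφ))
  simp only [Subtype.mk.injEq] at this
  rw [this]

lemma length_le_of_step_eq_none (h : C.step p = none) :
    (C.bar p).length ≤ ((2 * (1 / 2) ^ p.1 : ℝ) : EReal) := by
  unfold step at h
  split_ifs at h with hp
  exact (C.matching p.1).del_short _ hp

lemma flow_succ (n : ℕ) (p : C.Pt) : C.flow (n + 1) p = (C.flow n p).bind C.step := rfl

lemma flow_add (m n : ℕ) (p : C.Pt) : C.flow (m + n) p = (C.flow m p).bind (C.flow n) := by
  induction n with
  | zero => cases C.flow m p <;> rfl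
  | succ n ih =>
    rw [← add_assoc, flow_succ, ih]
    cases C.flow m p <;> rfl

lemma fst_of_flow_eq_some (h : C.flow n p = some q) : q.1 = p.1 + n := by
  induction n generalizing q with
  | zero => cases h; rfl
  | succ n ih =>
    obtain ⟨r, hr, hrq⟩ := Option.bind_eq_some_iff.1 ((flow_succ n p).symm.trans h)
    rw [fst_of_step_eq_some hrq, ih hr, add_assoc]

lemma eq_of_flow_eq_some (h : C.flow n p = some q) (h' : C.flow n p' = some q) : p = p' := by
  induction n generalizing q with
  | zero => cases h; cases h'; rfl
  | succ n ih =>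
    obtain ⟨r, hr, hrq⟩ := Option.bind_eq_some_iff.1 ((flow_succ n p).symm.trans h)
    obtain ⟨r', hr', hrq'⟩ := Option.bind_eq_some_iff.1 ((flow_succ n p').symm.trans h')
    obtain rfl := eq_of_step_eq_some hrq hrq'
    exact ih hr hr'

lemma close_of_flow_eq_some (h : C.flow n p = some q) :
    (C.bar p).Close (2 * (1 / 2) ^ p.1) (C.bar q) := by
  -- the partial sums of `∑ 2⁻ʲ` in closed form make the induction go through
  suffices (C.bar p).Close (2 * (1 / 2) ^ p.1 - 2 * (1 / 2) ^ (p.1 + n)) (C.bar q) from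
    this.mono (by linarith [pow_pos (by norm_num : (0 : ℝ) < 1 / 2) (p.1 + n)])
  induction n generalizing q with
  | zero => cases h; simpa using Bar.close_refl le_rfl _
  | succ n ih =>
    obtain ⟨r, hr, hrq⟩ := Option.bind_eq_some_iff.1 ((flow_succ n p).symm.trans h)
    have hstep := close_of_step_eq_some hrq
    rw [fst_of_flow_eq_some hr] at hstep
    exact ((ih hr).trans hstep).mono (le_of_eq (by ring))

lemma exists_isBorn_flow_eq_some (p : C.Pt) : ∃ b n, C.IsBorn b ∧ C.flow n b = some p := by
  obtain ⟨k, i⟩ := p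
  induction k with
  | zero => exact ⟨_, 0, fun q hq => Nat.succ_ne_zero _ (fst_of_step_eq_some hq).symm, rfl⟩
  | succ k ih =>
    by_cases hborn : C.IsBorn ⟨k + 1, i⟩
    · exact ⟨_, 0, hborn, rfl⟩
    obtain ⟨⟨k', i'⟩, hq⟩ := not_forall_not.1 hborn
    obtain rfl : k' = k := by have := fst_of_step_eq_some hq; simp_all
    obtain ⟨b, n, hb, hf⟩ := ih i'
    exact ⟨b, n + 1, hb, by rw [flow_succ, hf]; exact hq⟩

lemma IsBorn.unique {b b' : C.Pt} (hb : C.IsBorn b) (hb' : C.IsBorn b')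
    (h : C.flow n b = some q) (h' : C.flow m b' = some q) : b = b' := by
  wlog hnm : n ≤ m generalizing b b' n m
  · exact (this hb' hb h' h (by omega)).symm
  obtain ⟨s, rfl⟩ := Nat.exists_eq_add_of_le hnm
  rw [add_comm, flow_add] at h'
  obtain ⟨r, hr, hrq⟩ := Option.bind_eq_some_iff.1 h'
  obtain rfl := eq_of_flow_eq_some h hrq
  cases s with
  | zero => cases hr; rfl
  | succ s =>
    obtain ⟨t, -, ht⟩ := Option.bind_eq_some_iff.1 hr
    exact absurd ht (hb t)

lemma Survives.of_flow_eq_some (h : C.flow m p = some q) (hq : C.Survives q) : C.Survives p := by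
  intro n
  rcases le_or_gt n m with hnm | hnm
  · obtain ⟨s, rfl⟩ := Nat.exists_eq_add_of_le hnm
    rw [flow_add] at h
    obtain ⟨r, hr, -⟩ := Option.bind_eq_some_iff.1 h
    simp [hr]
  · obtain ⟨s, rfl⟩ := Nat.exists_eq_add_of_le hnm.le
    rw [flow_add, h]
    exact hq s

lemma Survives.flow_eq_some (hp : C.Survives p) (h : C.flow m p = some q) : C.Survives q := by
  intro n
  simpa [flow_add, h] using hp (m + n)

end Flow

section Limit

variable (C : MatchingChain)

/-- Junk value `0` once the flow from `p` stops. -/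
noncomputable def endsSeq (p : C.Pt) (n : ℕ) : ℝ × ℝ :=
  ((C.flow n p).map fun q => (C.bar q).ends).getD 0

noncomputable def limEnds (p : C.Pt) : ℝ × ℝ := limUnder atTop (C.endsSeq p)

open Classical in
noncomputable def limBar (p : C.Pt) : Bar :=
  ((C.limEnds p).1, if (C.bar p).IsInfinite then ⊤ else ((C.limEnds p).2 : EReal))

variable {C} {p q : C.Pt} {m n : ℕ}

lemma endsSeq_of_flow_eq_some (h : C.flow n p = some q) : C.endsSeq p n = (C.bar q).ends := by
  simp [endsSeq, h]

lemma limBar_snd_ne_bot (p : C.Pt) : (C.limBar p).2 ≠ ⊥ := by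
  unfold limBar
  split_ifs <;> simp

lemma isInfinite_iff_of_flow_eq_some (h : C.flow n p = some q) :
    (C.bar q).IsInfinite ↔ (C.bar p).IsInfinite :=
  (close_of_flow_eq_some h).1.symm

namespace Survives

lemma exists_flow_eq_some (hp : C.Survives p) (n : ℕ) : ∃ q, C.flow n p = some q :=
  Option.isSome_iff_exists.1 (hp n)

lemma tendsto_endsSeq (hp : C.Survives p) :
    Tendsto (C.endsSeq p) atTop (𝓝 (C.limEnds p)) := by
  refine tendsto_nhds_limUnder (cauchySeq_tendsto_of_complete
    (cauchySeq_of_le_geometric (1 / 2) ((1 / 2) ^ p.1) (by norm_num) fun n => ?_))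
  obtain ⟨q, hq⟩ := hp.exists_flow_eq_some n
  obtain ⟨r, hr⟩ := hp.exists_flow_eq_some (n + 1)
  have hqr : C.step q = some r := by rwa [flow_succ, hq] at hr
  rw [endsSeq_of_flow_eq_some hq, endsSeq_of_flow_eq_some hr, ← pow_add,
    ← fst_of_flow_eq_some hq]
  exact (close_of_step_eq_some hqr).2

lemma dist_limEnds_le (hp : C.Survives p) :
    dist (C.bar p).ends (C.limEnds p) ≤ 2 * (1 / 2) ^ p.1 := by
  refine le_of_tendsto (tendsto_const_nhds.dist hp.tendsto_endsSeq) (.of_forall fun n => ?_)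
  obtain ⟨q, hq⟩ := hp.exists_flow_eq_some n
  rw [endsSeq_of_flow_eq_some hq]
  exact (close_of_flow_eq_some hq).2

lemma ends_limBar (hp : C.Survives p) : (C.limBar p).ends = C.limEnds p := by
  by_cases hinf : (C.bar p).IsInfinite
  · suffices (C.limEnds p).2 = 0 by
      simp only [limBar, Bar.ends, if_pos hinf, EReal.toReal_top]
      exact Prod.ext rfl this.symm
    refine tendsto_nhds_unique ((continuous_snd.tendsto _).comp hp.tendsto_endsSeq) ?_
    refine tendsto_const_nhds.congr fun n => ?_
    obtain ⟨q, hq⟩ := hp.exists_flow_eq_some n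
    have : (C.bar q).IsInfinite := (isInfinite_iff_of_flow_eq_some hq).2 hinf
    simp [endsSeq_of_flow_eq_some hq, Bar.ends, show (C.bar q).2 = ⊤ from this]
  · simp only [limBar, Bar.ends, if_neg hinf, EReal.toReal_coe]

lemma close_limBar (hp : C.Survives p) : (C.bar p).Close (2 * (1 / 2) ^ p.1) (C.limBar p) := by
  refine ⟨?_, hp.ends_limBar ▸ hp.dist_limEnds_le⟩
  unfold limBar
  split_ifs with hinf
  · exact iff_of_true hinf rfl
  · exact iff_of_false hinf (EReal.coe_ne_top _)

lemma limBar_of_flow_eq_some (hp : C.Survives p) (h : C.flow m p = some q) :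
    C.limBar q = C.limBar p := by
  have hseq : ∀ n, C.endsSeq q n = C.endsSeq p (n + m) := fun n => by
    simp only [endsSeq, add_comm n, flow_add, h, Option.bind_some]
  have hlim : C.limEnds q = C.limEnds p :=
    (((tendsto_add_atTop_iff_nat m).2 hp.tendsto_endsSeq).congr fun n => (hseq n).symm).limUnder_eq
  unfold limBar
  rw [hlim, propext (isInfinite_iff_of_flow_eq_some h)]

end Survives

end Limit

section LimitBarcode

variable (C : MatchingChain)

def Persists (p : C.Pt) : Prop := C.Survives p ∧ (C.limBar p).IsValid

/-- The bars of the limit barcode: one for each orbit of the flow that persists in the limit,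
represented by the bar where it starts. -/
def LimitIdx : Type := {p : C.Pt // C.IsBorn p ∧ C.Persists p}

noncomputable def birth (p : C.Pt) : C.Pt := (exists_isBorn_flow_eq_some p).choose

variable {C} {p q : C.Pt} {m n : ℕ}

lemma isBorn_birth (p : C.Pt) : C.IsBorn (C.birth p) :=
  (exists_isBorn_flow_eq_some p).choose_spec.choose_spec.1

lemma exists_flow_birth_eq_some (p : C.Pt) : ∃ n, C.flow n (C.birth p) = some p :=
  ⟨_, (exists_isBorn_flow_eq_some p).choose_spec.choose_spec.2⟩

lemma Survives.birth (hp : C.Survives p) : C.Survives (C.birth p) :=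
  (exists_flow_birth_eq_some p).elim fun _ hn => hp.of_flow_eq_some hn

lemma Survives.limBar_birth (hp : C.Survives p) : C.limBar (C.birth p) = C.limBar p :=
  (exists_flow_birth_eq_some p).elim fun _ hn => (hp.birth.limBar_of_flow_eq_some hn).symm

lemma Persists.birth (hp : C.Persists p) : C.Persists (C.birth p) :=
  ⟨hp.1.birth, hp.1.limBar_birth ▸ hp.2⟩

lemma Persists.flow_eq_some (hp : C.Persists p) (h : C.flow m p = some q) : C.Persists q :=
  ⟨hp.1.flow_eq_some h, hp.1.limBar_of_flow_eq_some h ▸ hp.2⟩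

lemma fst_birth_le (p : C.Pt) : (C.birth p).1 ≤ p.1 :=
  (exists_flow_birth_eq_some p).elim fun _ hn => (fst_of_flow_eq_some hn).symm ▸ le_self_add

lemma exists_flow_eq_some_step_eq_none (h : C.flow n p = none) :
    ∃ m q, C.flow m p = some q ∧ C.step q = none := by
  induction n with
  | zero => cases h
  | succ n ih =>
    rw [flow_succ] at h
    cases hn : C.flow n p with
    | none => exact ih hn
    | some q => exact ⟨n, q, hn, by rwa [hn] at h⟩

lemma length_le_of_not_survives (hp : ¬ C.Survives p) :
    (C.bar p).length ≤ ((6 * (1 / 2) ^ p.1 : ℝ) : EReal) := by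
  obtain ⟨n, hn⟩ : ∃ n, C.flow n p = none := by simpa [Survives] using hp
  obtain ⟨m, q, hq, hstep⟩ := exists_flow_eq_some_step_eq_none hn
  have hpow : ((1 : ℝ) / 2) ^ q.1 ≤ (1 / 2) ^ p.1 :=
    pow_le_pow_of_le_one (by norm_num) (by norm_num) (by simp [fst_of_flow_eq_some hq])
  calc (C.bar p).length
      ≤ (C.bar q).length + ((2 * (2 * (1 / 2) ^ p.1) : ℝ) : EReal) :=
        (close_of_flow_eq_some hq).length_le (bar_isValid p).snd_ne_bot (bar_isValid q).snd_ne_bot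
    _ ≤ ((2 * (1 / 2) ^ q.1 : ℝ) : EReal) + ((2 * (2 * (1 / 2) ^ p.1) : ℝ) : EReal) := by
        gcongr; exact length_le_of_step_eq_none hstep
    _ ≤ ((6 * (1 / 2) ^ p.1 : ℝ) : EReal) := by
        rw [← EReal.coe_add, EReal.coe_le_coe_iff]; linarith

lemma Survives.length_le_of_not_isValid (hp : C.Survives p) (h : ¬ (C.limBar p).IsValid) :
    (C.bar p).length ≤ ((4 * (1 / 2) ^ p.1 : ℝ) : EReal) := by
  have hlim : (C.limBar p).length ≤ 0 := EReal.sub_nonpos.2 (not_lt.1 h)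
  calc (C.bar p).length
      ≤ (C.limBar p).length + ((2 * (2 * (1 / 2) ^ p.1) : ℝ) : EReal) :=
        hp.close_limBar.length_le (bar_isValid p).snd_ne_bot (limBar_snd_ne_bot p)
    _ ≤ ((4 * (1 / 2) ^ p.1 : ℝ) : EReal) := by
        grw [hlim]; rw [zero_add]; exact le_of_eq (by ring_nf)

lemma length_le_of_not_persists (hp : ¬ C.Persists p) :
    (C.bar p).length ≤ ((6 * (1 / 2) ^ p.1 : ℝ) : EReal) := by
  by_cases hs : C.Survives p
  · exact (hs.length_le_of_not_isValid fun hv => hp ⟨hs, hv⟩).trans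
      (EReal.coe_le_coe_iff.2 (by linarith [pow_pos (by norm_num : (0 : ℝ) < 1 / 2) p.1]))
  · exact length_le_of_not_survives hs

lemma IsBorn.length_le {k : ℕ} {i : (C.barcode (k + 1)).ι} (hb : C.IsBorn ⟨k + 1, i⟩) :
    (C.bar ⟨k + 1, i⟩).length ≤ ((2 * (1 / 2) ^ k : ℝ) : EReal) := by
  by_contra hlong
  have hi : i ∉ (C.matching k).del' := fun hdel => hlong ((C.matching k).del'_short i hdel)
  set j := (C.matching k).φ.symm ⟨i, hi⟩
  refine hb ⟨k, j⟩ ?_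
  rw [step, dif_neg j.2]
  simp [j]

lemma IsBorn.length_limBar_le {k : ℕ} {i : (C.barcode (k + 1)).ι} (hb : C.IsBorn ⟨k + 1, i⟩)
    (hs : C.Survives ⟨k + 1, i⟩) : (C.limBar ⟨k + 1, i⟩).length ≤ ((4 * (1 / 2) ^ k : ℝ) : EReal) :=
  calc (C.limBar ⟨k + 1, i⟩).length
      ≤ (C.bar ⟨k + 1, i⟩).length + ((2 * (2 * (1 / 2) ^ (k + 1)) : ℝ) : EReal) :=
        hs.close_limBar.symm.length_le (limBar_snd_ne_bot _) (bar_isValid _).snd_ne_bot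
    _ ≤ ((2 * (1 / 2) ^ k : ℝ) : EReal) + ((2 * (2 * (1 / 2) ^ (k + 1)) : ℝ) : EReal) := by
        gcongr; exact hb.length_le
    _ = ((4 * (1 / 2) ^ k : ℝ) : EReal) := by rw [← EReal.coe_add]; ring_nf

lemma length_limBar_le_of_lt {k : ℕ} (p : C.LimitIdx) (hk : k < p.1.1) :
    (C.limBar p.1).length ≤ ((2 * (2 * (1 / 2) ^ k) : ℝ) : EReal) := by
  revert hk
  obtain ⟨⟨_ | m, i⟩, hb, hs, -⟩ := p <;> intro hk
  · exact absurd hk (Nat.not_lt_zero k)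
  refine (hb.length_limBar_le hs).trans (EReal.coe_le_coe_iff.2 ?_)
  have : ((1 : ℝ) / 2) ^ m ≤ (1 / 2) ^ k :=
    pow_le_pow_of_le_one (by norm_num) (by norm_num) (Nat.lt_succ_iff.1 hk)
  linarith

variable (C) in
def stageDel (k : ℕ) : Set (C.barcode k).ι := {i | ¬ C.Persists ⟨k, i⟩}

variable (C) in
def lateDel (k : ℕ) : Set C.LimitIdx := {p | k < p.1.1}

variable (C) in
noncomputable def toLimit (k : ℕ) (i : ↥(C.stageDel k)ᶜ) : ↥(C.lateDel k)ᶜ :=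
  ⟨⟨C.birth ⟨k, i⟩, isBorn_birth _, (not_not.1 i.2).birth⟩, not_lt.2 (fst_birth_le (C := C) ⟨k, i⟩)⟩

lemma toLimit_injective (k : ℕ) : Function.Injective (C.toLimit k) := by
  intro i i' h
  have hb : C.birth ⟨k, i⟩ = C.birth ⟨k, i'⟩ := congrArg (fun p => p.1.1) h
  obtain ⟨n, hn⟩ := exists_flow_birth_eq_some (C := C) ⟨k, i⟩
  obtain ⟨n', hn'⟩ := exists_flow_birth_eq_some (C := C) ⟨k, i'⟩
  rw [hb] at hn
  obtain rfl : n = n' := by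
    have h₁ := fst_of_flow_eq_some hn
    have h₂ := fst_of_flow_eq_some hn'
    simp only at h₁ h₂
    omega
  have := Option.some_injective _ (hn.symm.trans hn')
  exact Subtype.ext (eq_of_heq (Sigma.mk.inj_iff.1 this).2)

lemma toLimit_surjective (k : ℕ) : Function.Surjective (C.toLimit k) := by
  rintro ⟨⟨p, hb, hp⟩, hlate⟩
  have hpk : p.1 ≤ k := not_lt.1 hlate
  obtain ⟨⟨k', j⟩, hq⟩ := hp.1.exists_flow_eq_some (k - p.1)
  obtain rfl : k' = k := by have := fst_of_flow_eq_some hq; simp at this; omega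
  refine ⟨⟨j, not_not.2 (hp.flow_eq_some hq)⟩, ?_⟩
  obtain ⟨n, hn⟩ := exists_flow_birth_eq_some (C := C) ⟨k', j⟩
  exact Subtype.ext (Subtype.ext ((isBorn_birth _).unique hb hn hq))

lemma close_toLimit {k : ℕ} (i : ↥(C.stageDel k)ᶜ) :
    ((C.barcode k).bar i).Close (2 * (1 / 2) ^ k) (C.limBar (C.toLimit k i).1.1) := by
  have hp : C.Persists ⟨k, i⟩ := not_not.1 i.2
  simpa [toLimit, hp.1.limBar_birth, bar] using hp.1.close_limBar

variable (C) in
noncomputable def limitEquiv (k : ℕ) : ↥(C.stageDel k)ᶜ ≃ ↥(C.lateDel k)ᶜ :=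
  .ofBijective _ ⟨toLimit_injective k, toLimit_surjective k⟩

variable (C) in
noncomputable def limit : Barcode where
  ι := C.LimitIdx
  bar p := C.limBar p.1
  valid p := p.2.2.2
  finLong ε hε := by
    obtain ⟨k, hk⟩ := exists_pow_lt_of_lt_one (show 0 < ε / 4 by positivity)
      (by norm_num : (1 : ℝ) / 2 < 1)
    exact finite_setOf_le_length_of_close (fun p => limBar_snd_ne_bot _)
      (by linarith : 2 * (2 * (1 / 2) ^ k) < ε) (fun p hp => length_limBar_le_of_lt p hp)
      (C.limitEquiv k) close_toLimit

variable (C) in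
noncomputable def limitMatching (k : ℕ) : Matching (3 * (1 / 2) ^ k) (C.barcode k) C.limit :=
  have hk : (0 : ℝ) ≤ (1 / 2) ^ k := by positivity
  .ofClose (C.stageDel k) (C.lateDel k)
    (fun _ hi => (length_le_of_not_persists hi).trans_eq (by ring_nf))
    (fun p hp => (length_limBar_le_of_lt p hp).trans (EReal.coe_le_coe_iff.2 (by linarith)))
    (C.limitEquiv k) fun i => (close_toLimit i).mono (by linarith)

end LimitBarcode

end MatchingChain

theorem exists_dHat_le_of_dHat_succ_lt (v : ℕ → Barcode)
    (hv : ∀ k, dHat (v k) (v (k + 1)) < ENNReal.ofReal ((1 / 2) ^ k)) :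
    ∃ L : Barcode, ∀ k, dHat (v k) L ≤ ENNReal.ofReal (3 * (1 / 2) ^ k) := by
  choose c δ hδ hδk hM using fun k => exists_matching_of_dHat_lt (hv k)
  let S (k : ℕ) : ℝ := ∑ j ∈ Finset.range k, c j
  have hchain (k : ℕ) :
      Nonempty (Matching ((1 / 2) ^ k) ((v k).shift (S k)) ((v (k + 1)).shift (S (k + 1)))) := by
    have hS : c k + S k = S (k + 1) := by simp [S, Finset.sum_range_succ, add_comm]
    obtain ⟨M⟩ := nonempty_matching_of_equiv ((hM k).some.shift (S k)) (.refl _)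
      ((v (k + 1)).shift_shift_equiv hS) (hδ k)
    exact ⟨M.mono (hδk k).le⟩
  let C : MatchingChain := ⟨fun k => (v k).shift (S k), fun k => (hchain k).some⟩
  exact ⟨C.limit, fun k => dHat_le_of_matching_shift (C.limitMatching k) (by positivity)⟩

end Barcode

/-- The space `𝓑̂` of barcodes modulo overall shift, with the
distance induced by the bottleneck distance, is complete: every Cauchy sequence
converges. -/
theorem barcode_space_complete (u : ℕ → Barcode)
    (hu : ∀ ε : ℝ≥0∞, 0 < ε → ∃ N : ℕ, ∀ m ≥ N, ∀ n ≥ N,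
      Barcode.dHat (u m) (u n) < ε) :
    ∃ B : Barcode, ∀ ε : ℝ≥0∞, 0 < ε → ∃ N : ℕ, ∀ n ≥ N,
      Barcode.dHat (u n) B < ε := by
  obtain ⟨φ, hφ, hφu⟩ := extraction_forall_of_eventually'
    (P := fun k N => ∀ m ≥ N, ∀ n ≥ N, Barcode.dHat (u m) (u n) < ENNReal.ofReal ((1 / 2) ^ k))
    fun k => (hu _ (ENNReal.ofReal_pos.2 (by positivity))).imp
      fun N hN N' hN' m hm n hn => hN m (hN'.trans hm) n (hN'.trans hn)
  obtain ⟨L, hL⟩ := Barcode.exists_dHat_le_of_dHat_succ_lt (u ∘ φ)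
    fun k => hφu k _ le_rfl _ (hφ.monotone k.le_succ)
  refine ⟨L, fun ε hε => ?_⟩
  have hlim : Tendsto (fun k : ℕ => ENNReal.ofReal (4 * (1 / 2) ^ k)) atTop (𝓝 0) := by
    simpa using ENNReal.tendsto_ofReal ((tendsto_pow_atTop_nhds_zero_of_lt_one
      (r := (1 / 2 : ℝ)) (by norm_num) (by norm_num)).const_mul 4)
  obtain ⟨k, hk⟩ := (hlim.eventually (gt_mem_nhds hε)).exists
  refine ⟨φ k, fun n hn => ?_⟩
  calc Barcode.dHat (u n) L ≤ Barcode.dHat (u n) (u (φ k)) + Barcode.dHat (u (φ k)) L :=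
        Barcode.dHat_triangle _ _ _
    _ < ENNReal.ofReal ((1 / 2) ^ k) + ENNReal.ofReal (3 * (1 / 2) ^ k) :=
        ENNReal.add_lt_add_of_lt_of_le ((hL k).trans_lt ENNReal.ofReal_lt_top).ne
          (hφu k n hn _ le_rfl) (hL k)
    _ = ENNReal.ofReal (4 * (1 / 2) ^ k) := by
        rw [← ENNReal.ofReal_add (by positivity) (by positivity)]; ring_nf
    _ < ε := hk
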